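/- Let 0 → N' → N → N'' → 0 be a short exact sequence of finitely generated abelian groups, and let ψ be a symmetric bilinear real-valued pairing on N (nondegenerate modulo torsion) such that the induced decomposition N ⊗ ℚ ≅ (N' ⊗ ℚ) ⊕ (N'' ⊗ ℚ) is orthogonal with respect to ψ. Then Δ(N) = Δ(N') · Δ(N''), where Δ denotes the regulator-type determinant: Δ(M) = det(ψ(b_i, b_j)) / (M : ⟨b_i⟩)² for any maximal linearly independent subset {b_i} of M. -/

import Mathlib

/-!
Ordering the family as `(f ∘ b') ++ c` makes the Gram matrix block upper triangular, because the
lower-left block `ψ (c i) (f (b' j))` vanishes by orthogonality; so the determinants multiply.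
The indices multiply because for every subgroup `L` of `N` the exact sequence gives
`[N : L] = [N' : f⁻¹ L] · [N'' : g L]`, and for `L` spanned by `(f ∘ b') ++ c` one has
`g L = ⟨g ∘ c⟩` and, as `g ∘ c` is linearly independent, `f⁻¹ L = ⟨b'⟩`.
-/

theorem Fin.range_append {α : Type*} {m n : ℕ} (u : Fin m → α) (v : Fin n → α) :
    Set.range (Fin.append u v) = Set.range u ∪ Set.range v := by
  ext x
  simp only [Set.mem_range, Set.mem_union]
  constructor
  · rintro ⟨i, rfl⟩
    induction i using Fin.addCases <;> simp
  · rintro (⟨i, rfl⟩ | ⟨i, rfl⟩)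
    · exact ⟨Fin.castAdd n i, Fin.append_left u v i⟩
    · exact ⟨Fin.natAdd m i, Fin.append_right u v i⟩

theorem Matrix.det_of_append_of_apply_eq_zero {α R : Type*} [CommRing R] {m n : ℕ}
    (B : α → α → R) (u : Fin m → α) (v : Fin n → α) (h : ∀ i j, B (v i) (u j) = 0) :
    (of fun i j => B (Fin.append u v i) (Fin.append u v j)).det =
      (of fun i j => B (u i) (u j)).det * (of fun i j => B (v i) (v j)).det := by
  rw [← det_submatrix_equiv_self finSumFinEquiv,
    ← det_fromBlocks_zero₂₁ _ (of fun i j => B (u i) (v j))]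
  congr 1
  ext (i | i) (j | j) <;> simp [h]

namespace Submodule

variable {R M' M M'' : Type*} [Ring R] [AddCommGroup M'] [AddCommGroup M] [AddCommGroup M'']
  [Module R M'] [Module R M] [Module R M'']
  (f : M' →ₗ[R] M) (g : M →ₗ[R] M'') {m n : ℕ} (u : Fin m → M') (c : Fin n → M)

theorem card_quotient_eq_mul_of_exact (hg : Function.Surjective g)
    (hexact : LinearMap.range f = LinearMap.ker g) (L : Submodule R M) :
    Nat.card (M ⧸ L) = Nat.card (M' ⧸ L.comap f) * Nat.card (M'' ⧸ L.map g) := by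
  let K := (LinearMap.range f).map L.mkQ
  have hK : Nat.card K = Nat.card (M' ⧸ L.comap f) := by
    have hker : LinearMap.ker (L.mkQ ∘ₗ f) = L.comap f := by
      rw [LinearMap.ker_comp, ker_mkQ]
    have hrange : LinearMap.range (L.mkQ ∘ₗ f) = K := LinearMap.range_comp f L.mkQ
    rw [← hker, ← hrange]
    exact Nat.card_congr (L.mkQ ∘ₗ f).quotKerEquivRange.toEquiv.symm
  have hquot : Nat.card ((M ⧸ L) ⧸ K) = Nat.card (M'' ⧸ L.map g) := by
    have hg' : Function.Surjective ((L.map g).mkQ ∘ₗ g) := (mkQ_surjective _).comp hg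
    have hker : LinearMap.ker ((L.map g).mkQ ∘ₗ g) = L ⊔ LinearMap.range f := by
      rw [LinearMap.ker_comp, ker_mkQ, comap_map_eq, hexact]
    rw [Nat.card_congr (quotientQuotientEquivQuotientSup L (LinearMap.range f)).toEquiv, ← hker]
    exact Nat.card_congr (LinearMap.quotKerEquivOfSurjective _ hg').toEquiv
  rw [card_eq_card_quotient_mul_card K, hK, hquot]

theorem span_range_append_comp :
    span R (Set.range (Fin.append (f ∘ u) c)) =
      (span R (Set.range u)).map f ⊔ span R (Set.range c) := by
  rw [Fin.range_append, span_union, Set.range_comp, ← map_span]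

theorem map_span_range_append_comp (hexact : LinearMap.range f ≤ LinearMap.ker g) :
    (span R (Set.range (Fin.append (f ∘ u) c))).map g = span R (Set.range (g ∘ c)) := by
  rw [span_range_append_comp, map_sup, ← map_comp, LinearMap.range_le_ker_iff.mp hexact,
    Submodule.map_zero, bot_sup_eq, map_span, Set.range_comp]

theorem comap_span_range_append_comp (hf : Function.Injective f)
    (hexact : LinearMap.range f = LinearMap.ker g) (hc : LinearIndependent R (g ∘ c)) :
    (span R (Set.range (Fin.append (f ∘ u) c))).comap f = span R (Set.range u) := by
  have hcomap_range : (LinearMap.range f).comap f = ⊤ :=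
    eq_top_iff.2 fun x _ => LinearMap.mem_range_self f x
  have hdisj := (range_ker_disjoint hc).eq_bot
  rw [span_range_append_comp]
  set U := span R (Set.range u)
  set C := span R (Set.range c)
  calc (U.map f ⊔ C).comap f = ((U.map f ⊔ C) ⊓ LinearMap.range f).comap f := by
        rw [comap_inf, hcomap_range, inf_top_eq]
    _ = (U.map f ⊔ C ⊓ LinearMap.ker g).comap f := by
        rw [sup_inf_assoc_of_le _ LinearMap.map_le_range, hexact]
    _ = U := by rw [hdisj, sup_bot_eq, comap_map_eq_of_injective hf]

end Submodule

theorem stmt7_general {N' N N'' : Type*} [AddCommGroup N'] [AddCommGroup N] [AddCommGroup N'']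
    (f : N' →ₗ[ℤ] N) (g : N →ₗ[ℤ] N'')
    (hf : Function.Injective f) (hg : Function.Surjective g)
    (hexact : LinearMap.range f = LinearMap.ker g)
    (ψ : N → N → ℝ)
    (hsymm : ∀ x y, ψ x y = ψ y x)
    {m' m'' : ℕ} (b' : Fin m' → N') (c : Fin m'' → N)
    (hc : LinearIndependent ℤ (g ∘ c))
    (horth : ∀ i j, ψ (f (b' i)) (c j) = 0) :
    Matrix.det (Matrix.of fun i j : Fin (m' + m'') =>
        ψ (Fin.append (f ∘ b') c i) (Fin.append (f ∘ b') c j)) /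
      ((Nat.card (N ⧸ Submodule.span ℤ (Set.range (Fin.append (f ∘ b') c))) : ℝ)) ^ 2 =
    (Matrix.det (Matrix.of fun i j : Fin m' => ψ (f (b' i)) (f (b' j))) /
      ((Nat.card (N' ⧸ Submodule.span ℤ (Set.range b')) : ℝ)) ^ 2) *
    (Matrix.det (Matrix.of fun i j : Fin m'' => ψ (c i) (c j)) /
      ((Nat.card (N'' ⧸ Submodule.span ℤ (Set.range (g ∘ c))) : ℝ)) ^ 2) := by
  have horth_symm : ∀ i j, ψ (c i) (f (b' j)) = 0 := fun i j => (hsymm _ _).trans (horth j i)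
  rw [Matrix.det_of_append_of_apply_eq_zero ψ (f ∘ b') c horth_symm,
    Submodule.card_quotient_eq_mul_of_exact f g hg hexact,
    Submodule.comap_span_range_append_comp f g b' c hf hexact hc,
    Submodule.map_span_range_append_comp f g b' c hexact.le, Nat.cast_mul, mul_pow]
  exact mul_div_mul_comm _ _ _ _

/-- For a short exact sequence `0 → N' → N → N'' → 0` of finitely generated abelian groups
and a symmetric biadditive real pairing `ψ` on `N` (nondegenerate modulo torsion) for which
the induced rational splitting is orthogonal, one has `Δ(N) = Δ(N') · Δ(N'')`.  Here the
regulator-type determinant `Δ` of each group is computed from a maximal ℤ-linearly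
independent family together with the index of the subgroup it generates: on `N'` via the
restricted pairing `ψ(f·, f·)`, on `N''` via the descended pairing computed on lifts `c`,
and on `N` via the combined family `(f ∘ b') ++ c`. -/
theorem stmt7 {N' N N'' : Type*} [AddCommGroup N'] [AddCommGroup N] [AddCommGroup N'']
    [Module.Finite ℤ N'] [Module.Finite ℤ N] [Module.Finite ℤ N'']
    (f : N' →ₗ[ℤ] N) (g : N →ₗ[ℤ] N'')
    (hf : Function.Injective f) (hg : Function.Surjective g)
    (hexact : LinearMap.range f = LinearMap.ker g)
    (ψ : N → N → ℝ)
    (hsymm : ∀ x y, ψ x y = ψ y x)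
    (hadd : ∀ x y z, ψ (x + y) z = ψ x z + ψ y z)
    (hnd : ∀ x : N, (∀ y, ψ x y = 0) → ∃ n : ℤ, n ≠ 0 ∧ n • x = 0)
    {m' m'' : ℕ} (b' : Fin m' → N') (c : Fin m'' → N)
    (hb' : LinearIndependent ℤ b')
    (hc : LinearIndependent ℤ (g ∘ c))
    (hfin' : Finite (N' ⧸ Submodule.span ℤ (Set.range b')))
    (hfin'' : Finite (N'' ⧸ Submodule.span ℤ (Set.range (g ∘ c))))
    (hfin : Finite (N ⧸ Submodule.span ℤ (Set.range (Fin.append (f ∘ b') c))))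
    (horth : ∀ i j, ψ (f (b' i)) (c j) = 0) :
    Matrix.det (Matrix.of fun i j : Fin (m' + m'') =>
        ψ (Fin.append (f ∘ b') c i) (Fin.append (f ∘ b') c j)) /
      ((Nat.card (N ⧸ Submodule.span ℤ (Set.range (Fin.append (f ∘ b') c))) : ℝ)) ^ 2 =
    (Matrix.det (Matrix.of fun i j : Fin m' => ψ (f (b' i)) (f (b' j))) /
      ((Nat.card (N' ⧸ Submodule.span ℤ (Set.range b')) : ℝ)) ^ 2) *
    (Matrix.det (Matrix.of fun i j : Fin m'' => ψ (c i) (c j)) /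
      ((Nat.card (N'' ⧸ Submodule.span ℤ (Set.range (g ∘ c))) : ℝ)) ^ 2) :=
  stmt7_general f g hf hg hexact ψ hsymm b' c hc horth
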